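/- Suppose the weighted digraph G is balanced. Then the symmetric matrix H + Hᵀ, where H = L + B, is positive definite if and only if node 0 is globally reachable in the augmented digraph Ḡ. -/

import Mathlib

open Matrix

/-- Node `j` is reachable from `i` in the weighted digraph with adjacency matrix `A`
(arc from `i` to `j` iff `0 < A i j`). -/
def reaches {n : ℕ} (A : Matrix (Fin n) (Fin n) ℝ) : Fin n → Fin n → Prop :=
  Relation.ReflTransGen (fun i j => 0 < A i j)

/-- The weighted digraph is balanced: for every node, in-weight equals out-weight. -/
def balanced {n : ℕ} (A : Matrix (Fin n) (Fin n) ℝ) : Prop :=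
  ∀ i : Fin n, ∑ j, A i j = ∑ j, A j i

/-- The Laplacian `L = D - A` of the weighted digraph. -/
def lap {n : ℕ} (A : Matrix (Fin n) (Fin n) ℝ) : Matrix (Fin n) (Fin n) ℝ :=
  Matrix.diagonal (fun i => ∑ j, A i j) - A

/-- Node `0` (the leader) is globally reachable in the augmented digraph `Ḡ`:
from every node `i`, either `b i > 0` or there is a directed path in `G` from `i`
to some node `j` with `b j > 0`. -/
def leaderGloballyReachable {n : ℕ} (A : Matrix (Fin n) (Fin n) ℝ)
    (b : Fin n → ℝ) : Prop :=
  ∀ i : Fin n, 0 < b i ∨ ∃ j : Fin n, reaches A i j ∧ 0 < b j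

lemma quadform {n : ℕ} (A : Matrix (Fin n) (Fin n) ℝ) (hbal : balanced A)
    (b : Fin n → ℝ) (x : Fin n → ℝ) :
    x ⬝ᵥ (((lap A + Matrix.diagonal b) + (lap A + Matrix.diagonal b)ᵀ) *ᵥ x)
      = ∑ i, ∑ j, A i j * (x i - x j)^2 + 2 * ∑ i, b i * x i^2 := by
  have e1 : ∀ M : Matrix (Fin n) (Fin n) ℝ, x ⬝ᵥ (Mᵀ *ᵥ x) = x ⬝ᵥ (M *ᵥ x) := by
    intro M
    rw [mulVec_transpose, dotProduct_comm, ← dotProduct_mulVec]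
  have ediag : x ⬝ᵥ (Matrix.diagonal b *ᵥ x) = ∑ i, b i * x i ^ 2 := by
    simp only [dotProduct, mulVec_diagonal]
    exact Finset.sum_congr rfl fun i _ => by ring
  have eD : x ⬝ᵥ (Matrix.diagonal (fun i => ∑ j, A i j) *ᵥ x)
      = ∑ i, (∑ j, A i j) * x i ^ 2 := by
    simp only [dotProduct, mulVec_diagonal]
    exact Finset.sum_congr rfl fun i _ => by ring
  have eA : x ⬝ᵥ (A *ᵥ x) = ∑ i, ∑ j, A i j * (x i * x j) := by
    simp only [dotProduct, mulVec, Finset.mul_sum]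
    exact Finset.sum_congr rfl fun i _ => Finset.sum_congr rfl fun j _ => by ring
  have expand : ∑ i, ∑ j, A i j * (x i - x j)^2
      = ∑ i, (∑ j, A i j) * x i ^ 2 + ∑ j, (∑ i, A i j) * x j ^ 2
        - 2 * ∑ i, ∑ j, A i j * (x i * x j) := by
    have h1 : ∀ i, ∑ j, A i j * (x i - x j)^2
        = ∑ j, (A i j * x i ^ 2 + A i j * x j ^ 2 - 2 * (A i j * (x i * x j))) := by
      intro i
      exact Finset.sum_congr rfl fun j _ => by ring
    simp_rw [h1]
    simp only [Finset.sum_sub_distrib, Finset.sum_add_distrib]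
    congr 1
    · congr 1
      · exact Finset.sum_congr rfl fun i _ => by rw [← Finset.sum_mul]
      · rw [Finset.sum_comm]
        exact Finset.sum_congr rfl fun j _ => by rw [← Finset.sum_mul]
    · rw [Finset.mul_sum]
      exact Finset.sum_congr rfl fun i _ => by rw [Finset.mul_sum]
  have hbal2 : ∑ j, (∑ i, A i j) * x j ^ 2 = ∑ j, (∑ i, A j i) * x j ^ 2 :=
    Finset.sum_congr rfl fun j _ => by rw [← hbal j]
  rw [add_mulVec, dotProduct_add, e1, add_mulVec, dotProduct_add, lap, sub_mulVec,
    dotProduct_sub, eD, eA, ediag, expand, hbal2]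
  ring

/-- Suppose the weighted digraph `G` is balanced.  Then `H + Hᵀ`, with
`H = L + B`, is positive definite if and only if node `0` is globally reachable
in the augmented digraph `Ḡ`. -/
theorem balanced_H_sym_posDef_iff_leader_globally_reachable
    {n : ℕ} (A : Matrix (Fin n) (Fin n) ℝ)
    (hA : ∀ i j, 0 ≤ A i j) (hdiag : ∀ i, A i i = 0)
    (hbal : balanced A)
    (b : Fin n → ℝ) (hb : ∀ i, 0 ≤ b i)
    (H : Matrix (Fin n) (Fin n) ℝ) (hH : H = lap A + Matrix.diagonal b) :
    (H + Hᵀ).PosDef ↔ leaderGloballyReachable A b := by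
  classical
  subst hH
  have hstar : ∀ x : Fin n → ℝ, star x = x := fun x => funext fun i => rfl
  constructor
  · intro hpd i₀
    by_contra hcon
    push_neg at hcon
    obtain ⟨h1, h2⟩ := hcon
    set S : Finset (Fin n) := Finset.univ.filter (fun j => reaches A i₀ j) with hS
    have hmemS : ∀ j, j ∈ S ↔ reaches A i₀ j := by
      intro j; simp [hS]
    have hclosed : ∀ p ∈ S, ∀ q, 0 < A p q → q ∈ S := by
      intro p hp q hq
      exact (hmemS q).2 (((hmemS p).1 hp).tail hq)
    -- no arcs out of S (weight zero)
    have hout : ∀ p ∈ S, ∀ q, q ∉ S → A p q = 0 := by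
      intro p hp q hq
      rcases lt_or_eq_of_le (hA p q) with h | h
      · exact absurd (hclosed p hp q h) hq
      · exact h.symm
    -- no arcs into S, by balance
    have hin : ∀ q, q ∉ S → ∀ p ∈ S, A q p = 0 := by
      have hsum : ∑ p ∈ S, ∑ q, A p q = ∑ p ∈ S, ∑ q, A q p :=
        Finset.sum_congr rfl fun p _ => hbal p
      have hsplit : ∀ f : Fin n → ℝ, ∑ q, f q = ∑ q ∈ S, f q + ∑ q ∈ Sᶜ, f q := by
        intro f
        rw [← Finset.sum_add_sum_compl S f]
      have hLHS : ∑ p ∈ S, ∑ q, A p q = ∑ p ∈ S, ∑ q ∈ S, A p q := by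
        refine Finset.sum_congr rfl fun p hp => ?_
        rw [hsplit (A p)]
        have : ∑ q ∈ Sᶜ, A p q = 0 :=
          Finset.sum_eq_zero fun q hq => hout p hp q (Finset.mem_compl.1 hq)
        rw [this, add_zero]
      have hRHS : ∑ p ∈ S, ∑ q, A q p
          = ∑ p ∈ S, ∑ q ∈ S, A q p + ∑ p ∈ S, ∑ q ∈ Sᶜ, A q p := by
        rw [← Finset.sum_add_distrib]
        exact Finset.sum_congr rfl fun p _ => hsplit (fun q => A q p)
      have hdiagsum : ∑ p ∈ S, ∑ q ∈ S, A p q = ∑ p ∈ S, ∑ q ∈ S, A q p :=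
        Finset.sum_comm
      have hzero : ∑ p ∈ S, ∑ q ∈ Sᶜ, A q p = 0 := by
        have := hsum
        rw [hLHS, hRHS, hdiagsum] at this
        linarith
      intro q hq p hp
      have h0 : ∀ p ∈ S, ∀ q ∈ Sᶜ, A q p = 0 := by
        intro p hp q hq
        have hnn : ∀ p ∈ S, (0:ℝ) ≤ ∑ q ∈ Sᶜ, A q p :=
          fun p _ => Finset.sum_nonneg fun q _ => hA q p
        have h1 : ∑ q ∈ Sᶜ, A q p = 0 :=
          (Finset.sum_eq_zero_iff_of_nonneg fun r hr => hnn r hr).1 hzero p hp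
        exact (Finset.sum_eq_zero_iff_of_nonneg fun r _ => hA r p).1 h1 q hq
      exact h0 p hp q (Finset.mem_compl.2 hq)
    -- the indicator vector of S
    set x : Fin n → ℝ := fun j => if j ∈ S then 1 else 0 with hx
    have hxne : x ≠ 0 := by
      intro h
      have hi0 : i₀ ∈ S := (hmemS i₀).2 Relation.ReflTransGen.refl
      have := congrFun h i₀
      simp [hx, hi0] at this
    have hq := hpd.dotProduct_mulVec_pos hxne
    rw [hstar, quadform A hbal b x] at hq
    have hsum1 : ∑ i, ∑ j, A i j * (x i - x j)^2 = 0 := by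
      refine Finset.sum_eq_zero fun i _ => Finset.sum_eq_zero fun j _ => ?_
      by_cases hiS : i ∈ S
      · by_cases hjS : j ∈ S
        · simp [hx, hiS, hjS]
        · rw [hout i hiS j hjS, zero_mul]
      · by_cases hjS : j ∈ S
        · rw [hin i hiS j hjS, zero_mul]
        · simp [hx, hiS, hjS]
    have hsum2 : ∑ i, b i * x i ^ 2 = 0 := by
      refine Finset.sum_eq_zero fun i _ => ?_
      by_cases hiS : i ∈ S
      · have hbi : b i = 0 := by
          have := h2 i ((hmemS i).1 hiS)
          linarith [hb i]
        rw [hbi, zero_mul]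
      · simp [hx, hiS]
    rw [hsum1, hsum2] at hq
    norm_num at hq
  · intro hreach
    refine posDef_iff_dotProduct_mulVec.2 ⟨?_, ?_⟩
    · have : ((lap A + Matrix.diagonal b) + (lap A + Matrix.diagonal b)ᵀ)ᵀ
          = (lap A + Matrix.diagonal b) + (lap A + Matrix.diagonal b)ᵀ := by
        rw [transpose_add, transpose_transpose, add_comm]
      simpa [Matrix.IsHermitian, conjTranspose_eq_transpose_of_trivial] using this
    · intro x hx
      rw [hstar, quadform A hbal b x]
      have h1 : (0:ℝ) ≤ ∑ i, ∑ j, A i j * (x i - x j)^2 :=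
        Finset.sum_nonneg fun i _ => Finset.sum_nonneg fun j _ =>
          mul_nonneg (hA i j) (sq_nonneg _)
      have h2 : (0:ℝ) ≤ ∑ i, b i * x i ^ 2 :=
        Finset.sum_nonneg fun i _ => mul_nonneg (hb i) (sq_nonneg _)
      rcases lt_or_eq_of_le (by linarith :
          (0:ℝ) ≤ ∑ i, ∑ j, A i j * (x i - x j)^2 + 2 * ∑ i, b i * x i^2) with h | h
      · exact h
      exfalso
      -- both pieces vanish
      have hz1 : ∑ i, ∑ j, A i j * (x i - x j)^2 = 0 := by linarith
      have hz2 : ∑ i, b i * x i ^ 2 = 0 := by linarith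
      have hedge : ∀ i j, 0 < A i j → x i = x j := by
        intro i j hij
        have := (Finset.sum_eq_zero_iff_of_nonneg fun i _ =>
          Finset.sum_nonneg fun j _ => mul_nonneg (hA i j) (sq_nonneg _)).1 hz1
          i (Finset.mem_univ i)
        have h0 := (Finset.sum_eq_zero_iff_of_nonneg fun j _ =>
          mul_nonneg (hA i j) (sq_nonneg _)).1 this j (Finset.mem_univ j)
        have := mul_eq_zero.1 h0
        rcases this with h | h
        · exact absurd h hij.ne'
        · have := sq_eq_zero_iff.1 h
          linarith [this]
      have hbz : ∀ i, 0 < b i → x i = 0 := by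
        intro i hbi
        have h0 := (Finset.sum_eq_zero_iff_of_nonneg fun i _ =>
          mul_nonneg (hb i) (sq_nonneg _)).1 hz2 i (Finset.mem_univ i)
        rcases mul_eq_zero.1 h0 with h | h
        · exact absurd h hbi.ne'
        · exact sq_eq_zero_iff.1 h
      have hconst : ∀ i j, reaches A i j → x i = x j := by
        intro i j hij
        induction hij with
        | refl => rfl
        | tail _ hstep ih => exact ih.trans (hedge _ _ hstep)
      have hzero : ∀ i, x i = 0 := by
        intro i
        rcases hreach i with hbi | ⟨j, hij, hbj⟩
        · exact hbz i hbi
        · rw [hconst i j hij]; exact hbz j hbj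
      exact hx (funext hzero)
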